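/- Let G be an ample Hausdorff groupoid with compact unit space. The representation π: ℂF(G) → A(G) is a *-algebra isomorphism onto A(G) if and only if G is a group. -/
import Mathlib


open scoped Classical

/-- A groupoid encoded as a "groupoid with zero": the partially defined composition is
totalised by declaring non-composable products to be `0`.  The actual groupoid elements are
the nonzero elements; the range and source of a nonzero `a` are `a * a⁻¹` and `a⁻¹ * a`. -/
class GroupoidZ (G : Type*) extends Mul G, Inv G, Zero G where
  zero_mul' : ∀ a : G, 0 * a = 0
  mul_zero' : ∀ a : G, a * 0 = 0
  inv_zero' : (0 : G)⁻¹ = 0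
  inv_inv' : ∀ a : G, a⁻¹⁻¹ = a
  mul_assoc' : ∀ a b c : G, a * b ≠ 0 → b * c ≠ 0 → a * b * c = a * (b * c)
  mul_ne_zero_iff' : ∀ a b : G, a ≠ 0 → b ≠ 0 → (a * b ≠ 0 ↔ a⁻¹ * a = b * b⁻¹)
  mul_inv_self_mul' : ∀ a : G, a * a⁻¹ * a = a
  mul_inv_rev' : ∀ a b : G, (a * b)⁻¹ = b⁻¹ * a⁻¹

/-- The unit space `G⁰`: the nonzero idempotents. -/
def unitSpace (G : Type*) [GroupoidZ G] : Set G := {e | e ≠ 0 ∧ e * e = e}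

/-- A bisection: a set of groupoid elements on which range and source are injective. -/
def IsBisection {G : Type*} [GroupoidZ G] (B : Set G) : Prop :=
  (0 : G) ∉ B ∧ (∀ a ∈ B, ∀ b ∈ B, a * a⁻¹ = b * b⁻¹ → a = b) ∧
    (∀ a ∈ B, ∀ b ∈ B, a⁻¹ * a = b⁻¹ * b → a = b)

/-- A set is full if its range and source images are the whole unit space. -/
def IsFull {G : Type*} [GroupoidZ G] (B : Set G) : Prop :=
  (fun a => a * a⁻¹) '' B = unitSpace G ∧ (fun a => a⁻¹ * a) '' B = unitSpace G

/-- Compact open bisection. -/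
def IsCOB {G : Type*} [GroupoidZ G] [TopologicalSpace G] (B : Set G) : Prop :=
  IsBisection B ∧ IsCompact B ∧ IsOpen B

/-- The product `AB = {αβ : (α,β) composable}` of two subsets of a groupoid. -/
def setMul {G : Type*} [GroupoidZ G] (A B : Set G) : Set G := Set.image2 (· * ·) A B \ {0}

/-- The inverse `B⁻¹ = {γ⁻¹ : γ ∈ B}` of a subset of a groupoid. -/
def setInv {G : Type*} [GroupoidZ G] (B : Set G) : Set G := Inv.inv '' B

/-- The topological full group `F(G)`: all full compact open bisections. -/
def fullBisections (G : Type*) [GroupoidZ G] [TopologicalSpace G] : Set (Set G) :=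
  {B | IsCOB B ∧ IsFull B}

/-- Indicator function `1_B : G → ℂ`. -/
noncomputable def indic {G : Type*} [GroupoidZ G] (B : Set G) : G → ℂ := Set.indicator B 1

/-- Convolution product on functions `G → ℂ`: `(f * g)(γ) = ∑_{αβ = γ} f(α) g(β)`. -/
noncomputable def convol {G : Type*} [GroupoidZ G] (f g : G → ℂ) : G → ℂ := fun γ =>
  if γ = 0 then 0 else ∑ᶠ p ∈ {p : G × G | p.1 * p.2 = γ}, f p.1 * g p.2

/-- The `*`-involution `f^*(γ) = conj (f (γ⁻¹))`. -/
noncomputable def starF {G : Type*} [GroupoidZ G] (f : G → ℂ) : G → ℂ := fun γ =>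
  (starRingEnd ℂ) (f γ⁻¹)

/-- An ample Hausdorff (étale) groupoid: Hausdorff, locally compact, continuous inversion
and (partial) multiplication, the unit space is open and closed, the range map is open,
and there is a basis of compact open bisections.  The adjoined `0` is an isolated point. -/
class AmpleGroupoid (G : Type*) [TopologicalSpace G] extends GroupoidZ G where
  t2' : T2Space G
  locallyCompact' : LocallyCompactSpace G
  isolated_zero' : IsOpen {(0 : G)}
  continuous_inv' : Continuous (fun a : G => a⁻¹)
  continuousOn_mul' : ContinuousOn (fun p : G × G => p.1 * p.2) {p : G × G | p.1 * p.2 ≠ 0}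
  isOpen_unitSpace' : IsOpen (unitSpace G)
  isClosed_unitSpace' : IsClosed (unitSpace G)
  isOpenMap_range' : ∀ B : Set G, IsOpen B → (0 : G) ∉ B → IsOpen ((fun a => a * a⁻¹) '' B)
  ample_basis' : ∀ (a : G) (U : Set G), a ≠ 0 → IsOpen U → a ∈ U →
    ∃ B : Set G, IsCOB B ∧ a ∈ B ∧ B ⊆ U

/-- The image `π(ℂF(G))` of the representation of the topological full group: the span of
the indicator functions of full compact open bisections. -/
noncomputable def spanFull (G : Type*) [GroupoidZ G] [TopologicalSpace G] :
    Submodule ℂ (G → ℂ) :=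
  Submodule.span ℂ {f | ∃ B ∈ fullBisections G, f = indic B}

/-- The Steinberg algebra `A(G)` (as a subspace of `G → ℂ`): the span of the indicator
functions of compact open bisections. -/
noncomputable def steinberg (G : Type*) [GroupoidZ G] [TopologicalSpace G] :
    Submodule ℂ (G → ℂ) :=
  Submodule.span ℂ {f | ∃ B : Set G, IsCOB B ∧ f = indic B}


section GZLemmas

variable {G : Type*} [GroupoidZ G]

lemma gz_inv_ne {a : G} (h : a ≠ 0) : a⁻¹ ≠ 0 := fun h0 =>
  h (by rw [← GroupoidZ.inv_inv' a, h0, GroupoidZ.inv_zero'])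

lemma gz_riu {a : G} (h : a ≠ 0) : a * a⁻¹ ≠ 0 := fun h0 =>
  h (by rw [← GroupoidZ.mul_inv_self_mul' a, h0, GroupoidZ.zero_mul'])

lemma gz_siu {a : G} (h : a ≠ 0) : a⁻¹ * a ≠ 0 := by
  have := gz_riu (gz_inv_ne h)
  rwa [GroupoidZ.inv_inv'] at this

lemma gz_range_unit {a : G} (h : a ≠ 0) : a * a⁻¹ ∈ unitSpace G := by
  refine ⟨gz_riu h, ?_⟩
  have h1 := GroupoidZ.mul_assoc' (a * a⁻¹) a a⁻¹
    (by rw [GroupoidZ.mul_inv_self_mul']; exact h) (gz_riu h)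
  rw [GroupoidZ.mul_inv_self_mul' a] at h1
  exact h1.symm

lemma gz_source_unit {a : G} (h : a ≠ 0) : a⁻¹ * a ∈ unitSpace G := by
  have := gz_range_unit (gz_inv_ne h)
  rwa [GroupoidZ.inv_inv'] at this

lemma gz_unit_source {u : G} (hu : u ∈ unitSpace G) : u⁻¹ * u = u := by
  obtain ⟨hu0, huu⟩ := hu
  have hrs : u⁻¹ * u = u * u⁻¹ :=
    (GroupoidZ.mul_ne_zero_iff' u u hu0 hu0).mp (by rw [huu]; exact hu0)
  have hsu : (u⁻¹ * u) * u = u⁻¹ * u := by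
    have := GroupoidZ.mul_assoc' u⁻¹ u u (gz_siu hu0) (by rw [huu]; exact hu0)
    rw [huu] at this
    exact this
  have hru : (u * u⁻¹) * u = u := GroupoidZ.mul_inv_self_mul' u
  rw [← hrs] at hru
  rw [hsu] at hru
  exact hru

lemma gz_unit_range {u : G} (hu : u ∈ unitSpace G) : u * u⁻¹ = u := by
  have hrs : u⁻¹ * u = u * u⁻¹ :=
    (GroupoidZ.mul_ne_zero_iff' u u hu.1 hu.1).mp (by rw [hu.2]; exact hu.1)
  rw [← hrs]
  exact gz_unit_source hu

/-- In a bisection with singleton unit space, any two elements coincide. -/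
lemma gz_bisection_sub {e : G} (hsing : unitSpace G = {e}) {B : Set G}
    (hB : IsBisection B) {a b : G} (ha : a ∈ B) (hb : b ∈ B) : a = b := by
  have ha0 : a ≠ 0 := fun h => hB.1 (h ▸ ha)
  have hb0 : b ≠ 0 := fun h => hB.1 (h ▸ hb)
  have hae : a * a⁻¹ = e := by
    have := gz_range_unit ha0; rw [hsing] at this; exact this
  have hbe : b * b⁻¹ = e := by
    have := gz_range_unit hb0; rw [hsing] at this; exact this
  exact hB.2.1 a ha b hb (hae.trans hbe.symm)

end GZLemmas

section AmpleLemmas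

variable {G : Type*} [TopologicalSpace G] [AmpleGroupoid G]

/-- When the unit space is a singleton, every nonzero singleton is a full compact open
bisection. -/
lemma gz_singleton_fullCOB {e : G} (hsing : unitSpace G = {e}) {a : G} (ha : a ≠ 0) :
    {a} ∈ fullBisections G := by
  obtain ⟨B, hB, haB, -⟩ := AmpleGroupoid.ample_basis' a Set.univ ha isOpen_univ trivial
  have hBa : B = {a} :=
    Set.eq_singleton_iff_unique_mem.mpr ⟨haB, fun b hb => gz_bisection_sub hsing hB.1 hb haB⟩
  refine ⟨hBa ▸ hB, ?_, ?_⟩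
  · rw [Set.image_singleton, hsing]
    have h1 : a * a⁻¹ ∈ unitSpace G := gz_range_unit ha
    rw [hsing, Set.mem_singleton_iff] at h1
    rw [h1]
  · rw [Set.image_singleton, hsing]
    have h1 : a⁻¹ * a ∈ unitSpace G := gz_source_unit ha
    rw [hsing, Set.mem_singleton_iff] at h1
    rw [h1]

/-- Key lemma for the forward direction: if the span of the full-bisection indicators is
the whole Steinberg algebra, then the unit space cannot contain two distinct points. -/
lemma gz_no_two_units (hspan : spanFull G = steinberg G) {x y : G}
    (hx : x ∈ unitSpace G) (hy : y ∈ unitSpace G) (hxy : x ≠ y) : False := by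
  haveI ht2 : T2Space G := AmpleGroupoid.t2'
  obtain ⟨B, hB, hxB, hBsub⟩ := AmpleGroupoid.ample_basis' x (unitSpace G \ {y}) hx.1
    (AmpleGroupoid.isOpen_unitSpace'.sdiff isClosed_singleton) ⟨hx, hxy⟩
  have hmem : indic B ∈ spanFull G := by
    rw [hspan]; exact Submodule.subset_span ⟨B, hB, rfl⟩
  obtain ⟨n, c, F, hsum⟩ := Submodule.mem_span_set'.mp hmem
  choose Bi hfull hFi using fun i => (F i).2
  have key : ∀ z ∈ unitSpace G, (if z ∈ B then (1 : ℂ) else 0) = ∑ i : Fin n, c i := by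
    intro z hz
    have hgam : ∀ i : Fin n, ∃ g, g ∈ Bi i ∧ g⁻¹ * g = z := by
      intro i
      have himg := (hfull i).2.2
      rw [← himg] at hz
      obtain ⟨g, hg, hg2⟩ := hz
      exact ⟨g, hg, hg2⟩
    choose γ hγmem hγsrc using hgam
    set A : Finset G := insert z (Finset.image γ Finset.univ) with hA
    have hsrcA : ∀ g ∈ A, g⁻¹ * g = z := by
      intro g hg
      rcases Finset.mem_insert.mp hg with rfl | hg
      · exact gz_unit_source hz
      · obtain ⟨i, -, rfl⟩ := Finset.mem_image.mp hg
        exact hγsrc i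
    have lhs : ∑ g ∈ A, indic B g = (if z ∈ B then (1 : ℂ) else 0) := by
      have hcong : ∀ g ∈ A, indic B g =
          (if g = z then (if z ∈ B then (1 : ℂ) else 0) else 0) := by
        intro g hg
        by_cases hgz : g = z
        · subst hgz; simp [indic, Set.indicator_apply]
        · rw [if_neg hgz]
          have hgB : g ∉ B := by
            intro hgB
            apply hgz
            have hgu : g ∈ unitSpace G := (hBsub hgB).1
            rw [← gz_unit_source hgu]
            exact hsrcA g hg
          simp [indic, Set.indicator_apply, hgB]
      rw [Finset.sum_congr rfl hcong, Finset.sum_ite_eq' A z]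
      rw [if_pos (Finset.mem_insert_self z _)]
    have rhs : ∑ g ∈ A, (∑ i : Fin n, c i • (F i : G → ℂ)) g = ∑ i : Fin n, c i := by
      have hcong : ∀ g ∈ A, (∑ i : Fin n, c i • (F i : G → ℂ)) g =
          ∑ i : Fin n, c i * indic (Bi i) g := by
        intro g _
        rw [Finset.sum_apply]
        refine Finset.sum_congr rfl fun i _ => ?_
        rw [hFi i]; rfl
      rw [Finset.sum_congr rfl hcong, Finset.sum_comm]
      refine Finset.sum_congr rfl fun i _ => ?_
      rw [← Finset.mul_sum]
      have hone : ∑ g ∈ A, indic (Bi i) g = 1 := by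
        have hcong2 : ∀ g ∈ A, indic (Bi i) g = (if g = γ i then (1 : ℂ) else 0) := by
          intro g hg
          by_cases hgB : g ∈ Bi i
          · have hgγ : g = γ i :=
              (hfull i).1.1.2.2 g hgB (γ i) (hγmem i) ((hsrcA g hg).trans (hγsrc i).symm)
            rw [if_pos hgγ]
            simp [indic, Set.indicator_apply, hgB]
          · have hne' : g ≠ γ i := fun h => hgB (h ▸ hγmem i)
            rw [if_neg hne']
            simp [indic, Set.indicator_apply, hgB]
        rw [Finset.sum_congr rfl hcong2, Finset.sum_ite_eq' A (γ i)]
        rw [if_pos (Finset.mem_insert_of_mem (Finset.mem_image_of_mem γ (Finset.mem_univ i)))]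
      rw [hone, mul_one]
    calc (if z ∈ B then (1 : ℂ) else 0) = ∑ g ∈ A, indic B g := lhs.symm
      _ = ∑ g ∈ A, (∑ i : Fin n, c i • (F i : G → ℂ)) g := by rw [hsum]
      _ = ∑ i : Fin n, c i := rhs
  have h1 := key x hx
  have h2 := key y hy
  rw [if_pos hxB] at h1
  rw [if_neg (fun h => (hBsub h).2 rfl)] at h2
  exact one_ne_zero (h1.trans h2.symm)

end AmpleLemmas

/-- The representation `π : ℂF(G) → A(G)` is a `*`-algebra isomorphism onto
`A(G)` (equivalently, it is injective—the family of indicators of full compact open bisections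
is linearly independent—and surjective onto the Steinberg algebra) iff `G` is a group. -/
theorem rep_isomorphism_iff_group {G : Type*} [TopologicalSpace G] [AmpleGroupoid G]
    (hcomp : IsCompact (unitSpace G)) (hne : ∃ a : G, a ≠ 0) :
    (LinearIndependent ℂ
        (fun B : {B : Set G // B ∈ fullBisections G} => indic B.1) ∧
      spanFull G = steinberg G) ↔ ∃ e : G, unitSpace G = {e} := by
  constructor
  · rintro ⟨-, hspan⟩
    obtain ⟨a, ha⟩ := hne
    have heu : a * a⁻¹ ∈ unitSpace G := gz_range_unit ha
    refine ⟨a * a⁻¹, ?_⟩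
    ext x
    simp only [Set.mem_singleton_iff]
    constructor
    · intro hx
      by_contra hxe
      exact gz_no_two_units hspan hx heu hxe
    · rintro rfl; exact heu
  · rintro ⟨e, hsing⟩
    constructor
    · rw [linearIndependent_iff']
      intro s g hsum i hi
      have hhi : e ∈ (fun a => a * a⁻¹) '' (i.1 : Set G) := by
        rw [i.2.2.1, hsing]; exact rfl
      obtain ⟨a, haB, -⟩ := hhi
      have hia : (i.1 : Set G) = {a} :=
        Set.eq_singleton_iff_unique_mem.mpr
          ⟨haB, fun b hb => gz_bisection_sub hsing i.2.1.1 hb haB⟩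
      have hev := congrFun hsum a
      rw [Finset.sum_apply] at hev
      simp only [Pi.smul_apply, smul_eq_mul, Pi.zero_apply] at hev
      have hterm : ∀ j ∈ s, j ≠ i → g j * indic (j.1 : Set G) a = 0 := by
        intro j _ hji
        have hanj : a ∉ (j.1 : Set G) := by
          intro haj
          apply hji
          apply Subtype.ext
          have hja : (j.1 : Set G) = {a} :=
            Set.eq_singleton_iff_unique_mem.mpr
              ⟨haj, fun b hb => gz_bisection_sub hsing j.2.1.1 hb haj⟩
          rw [hja, hia]
        simp [indic, Set.indicator_apply, hanj]
      have hsingle := Finset.sum_eq_single_of_mem i hi hterm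
      rw [hev] at hsingle
      have : indic (i.1 : Set G) a = 1 := by
        simp [indic, Set.indicator_apply, haB]
      rw [this, mul_one] at hsingle
      exact hsingle.symm
    · apply le_antisymm
      · apply Submodule.span_le.mpr
        rintro f ⟨B, hBfull, rfl⟩
        exact Submodule.subset_span ⟨B, hBfull.1, rfl⟩
      · apply Submodule.span_le.mpr
        rintro f ⟨B, hB, rfl⟩
        by_cases hBne : B.Nonempty
        · obtain ⟨a, haB⟩ := hBne
          have hBa : B = {a} :=
            Set.eq_singleton_iff_unique_mem.mpr
              ⟨haB, fun b hb => gz_bisection_sub hsing hB.1 hb haB⟩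
          have ha0 : a ≠ 0 := fun h => hB.1.1 (h ▸ haB)
          exact Submodule.subset_span ⟨B, hBa ▸ gz_singleton_fullCOB hsing ha0, rfl⟩
        · rw [Set.not_nonempty_iff_eq_empty] at hBne
          have h0 : indic B = 0 := by
            subst hBne
            ext x
            simp [indic]
          rw [h0]
          exact (spanFull G).zero_mem
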